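/- Let R be a commutative ring (in the application, the coordinate ring of an affine variety over an algebraically closed field k). Consider the R-algebra homomorphism φ : R[x₀] × R[y₀] → R[x₀]/(x₀²) given by φ(f(x₀), g(y₀)) = class of f(x₀) − g(x₀). Then the kernel of φ is generated as an R-algebra by the elements u := (x₀, y₀) and v := (x₀², 0), which satisfy the single relation v(u² − v) = 0; that is, ker(φ) ≅ R ⊗ k[u,v]/(v(u² − v)) ≅ R[u,v]/(v(u² − v)). -/
import Mathlib


/-!
# Statement 12 (local model of the universal family of dubbies, from the proof
of Proposition 3.9 of Kebekus–Kovács)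

Let `R` be a commutative ring (in the application, the coordinate ring of an
affine variety over an algebraically closed field).  Consider the map
`φ : R[x₀] × R[y₀] → R[x₀]/(x₀²)`, `(f, g) ↦ f(x₀) − g(x₀) mod (x₀²)`
(substituting `y₀ := x₀` in `g`).  Its kernel is an `R`-subalgebra of
`R[x₀] × R[y₀]`, and it is generated as an `R`-algebra by
`u := (x₀, y₀)` and `v := (x₀², 0)`, which satisfy the single relation
`v·(u² − v) = 0`; that is, `ker φ ≅ R[u, v]/(v·(u² − v))`.

We formalize this by the `R`-algebra homomorphism
`dubbyGluing R : R[u, v] → R[x₀] × R[y₀]` with `u ↦ (x₀, y₀)`,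
`v ↦ (x₀², 0)` (where `u = X 0`, `v = X 1` in `MvPolynomial (Fin 2) R`), and
assert that its range is exactly `{p | φ p = 0}` (generation) and that its
kernel is the principal ideal generated by `v·(u² − v)` (the single relation).
-/

/-- The `R`-algebra homomorphism `R[u,v] → R[x₀] × R[y₀]` sending
`u ↦ (x₀, y₀)` and `v ↦ (x₀², 0)`. -/
noncomputable def dubbyGluing (R : Type*) [CommRing R] :
    MvPolynomial (Fin 2) R →ₐ[R] Polynomial R × Polynomial R :=
  MvPolynomial.aeval ![(Polynomial.X, Polynomial.X), (Polynomial.X ^ 2, 0)]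

/-- The map `φ : R[x₀] × R[y₀] → R[x₀]/(x₀²)`,
`(f, g) ↦ class of f(x₀) − g(x₀)`. -/
noncomputable def dubbyPhi (R : Type*) [CommRing R] :
    Polynomial R × Polynomial R →
      Polynomial R ⧸ Ideal.span {(Polynomial.X : Polynomial R) ^ 2} :=
  fun p => Ideal.Quotient.mk (Ideal.span {(Polynomial.X : Polynomial R) ^ 2})
    (p.1 - p.2)

section Aux
variable (R : Type*) [CommRing R]

noncomputable def dubbyE : Polynomial R →ₐ[R] MvPolynomial (Fin 2) R :=
  Polynomial.aeval (MvPolynomial.X 0)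

lemma dubbyGluing_X0 : dubbyGluing R (MvPolynomial.X 0) = (Polynomial.X, Polynomial.X) := by
  simp [dubbyGluing]

lemma dubbyGluing_X1 : dubbyGluing R (MvPolynomial.X 1) = (Polynomial.X ^ 2, 0) := by
  simp [dubbyGluing]

lemma dubbyGluing_e (a : Polynomial R) : dubbyGluing R (dubbyE R a) = (a, a) := by
  rw [dubbyE, ← Polynomial.aeval_algHom_apply, dubbyGluing_X0]
  refine Prod.ext ?_ ?_
  · rw [show (Polynomial.aeval ((Polynomial.X, Polynomial.X) : Polynomial R × Polynomial R) a).1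
      = (AlgHom.fst R (Polynomial R) (Polynomial R)) (Polynomial.aeval _ a) from rfl,
      ← Polynomial.aeval_algHom_apply]
    show Polynomial.aeval Polynomial.X a = a
    simp
  · rw [show (Polynomial.aeval ((Polynomial.X, Polynomial.X) : Polynomial R × Polynomial R) a).2
      = (AlgHom.snd R (Polynomial R) (Polynomial R)) (Polynomial.aeval _ a) from rfl,
      ← Polynomial.aeval_algHom_apply]
    show Polynomial.aeval Polynomial.X a = a
    simp

lemma dubbyRel_mem_ker :
    Ideal.span {(MvPolynomial.X 1 : MvPolynomial (Fin 2) R) *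
        ((MvPolynomial.X 0) ^ 2 - MvPolynomial.X 1)} ≤ RingHom.ker (dubbyGluing R) := by
  rw [Ideal.span_le, Set.singleton_subset_iff]
  have : dubbyGluing R ((MvPolynomial.X 1 : MvPolynomial (Fin 2) R) *
      ((MvPolynomial.X 0) ^ 2 - MvPolynomial.X 1)) = 0 := by
    rw [map_mul, map_sub, map_pow, dubbyGluing_X0, dubbyGluing_X1]
    ext <;> simp
  exact this

lemma dubby_decomp (p : MvPolynomial (Fin 2) R) :
    ∃ a b : Polynomial R, p - (dubbyE R a + MvPolynomial.X 1 * dubbyE R b) ∈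
      Ideal.span {(MvPolynomial.X 1 : MvPolynomial (Fin 2) R) *
        ((MvPolynomial.X 0) ^ 2 - MvPolynomial.X 1)} := by
  set I := Ideal.span {(MvPolynomial.X 1 : MvPolynomial (Fin 2) R) *
        ((MvPolynomial.X 0) ^ 2 - MvPolynomial.X 1)} with hI
  induction p using MvPolynomial.induction_on with
  | C r =>
      exact ⟨Polynomial.C r, 0, by simp [dubbyE]⟩
  | add p q hp hq =>
      obtain ⟨a, b, hab⟩ := hp
      obtain ⟨a', b', hab'⟩ := hq
      refine ⟨a + a', b + b', ?_⟩
      have : p + q - (dubbyE R (a + a') + MvPolynomial.X 1 * dubbyE R (b + b'))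
          = (p - (dubbyE R a + MvPolynomial.X 1 * dubbyE R b))
            + (q - (dubbyE R a' + MvPolynomial.X 1 * dubbyE R b')) := by
        rw [map_add, map_add]; ring
      rw [this]; exact add_mem hab hab'
  | mul_X p i hp =>
      obtain ⟨a, b, hab⟩ := hp
      fin_cases i
      · refine ⟨a * Polynomial.X, b * Polynomial.X, ?_⟩
        show p * MvPolynomial.X 0 - (dubbyE R (a * Polynomial.X)
            + MvPolynomial.X 1 * dubbyE R (b * Polynomial.X)) ∈ I
        have he : dubbyE R (a * Polynomial.X) = dubbyE R a * MvPolynomial.X 0 := by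
          simp [dubbyE]
        have he' : dubbyE R (b * Polynomial.X) = dubbyE R b * MvPolynomial.X 0 := by
          simp [dubbyE]
        have heq : p * MvPolynomial.X 0 - (dubbyE R (a * Polynomial.X)
              + MvPolynomial.X 1 * dubbyE R (b * Polynomial.X))
            = (p - (dubbyE R a + MvPolynomial.X 1 * dubbyE R b)) * MvPolynomial.X 0 := by
          rw [he, he']; ring
        rw [heq]; exact Ideal.mul_mem_right _ _ hab
      · refine ⟨0, a + Polynomial.X ^ 2 * b, ?_⟩
        show p * MvPolynomial.X 1 - (dubbyE R 0
            + MvPolynomial.X 1 * dubbyE R (a + Polynomial.X ^ 2 * b)) ∈ I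
        have he : dubbyE R (a + Polynomial.X ^ 2 * b)
            = dubbyE R a + MvPolynomial.X 0 ^ 2 * dubbyE R b := by
          simp [dubbyE]
        have heq : p * MvPolynomial.X 1 - (dubbyE R 0
              + MvPolynomial.X 1 * dubbyE R (a + Polynomial.X ^ 2 * b))
            = (p - (dubbyE R a + MvPolynomial.X 1 * dubbyE R b)) * MvPolynomial.X 1
              - (MvPolynomial.X 1 * (MvPolynomial.X 0 ^ 2 - MvPolynomial.X 1)) * dubbyE R b := by
          rw [he, map_zero]; ring
        rw [heq]
        exact sub_mem (Ideal.mul_mem_right _ _ hab)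
          (Ideal.mul_mem_right _ _ (Ideal.subset_span rfl))

end Aux

theorem kernel_of_dubby_local_model (R : Type*) [CommRing R] :
    Set.range (dubbyGluing R) = {p | dubbyPhi R p = 0} ∧
      RingHom.ker (dubbyGluing R) =
        Ideal.span {(MvPolynomial.X 1 : MvPolynomial (Fin 2) R) *
          ((MvPolynomial.X 0) ^ 2 - MvPolynomial.X 1)} := by
  set I := Ideal.span {(Polynomial.X : Polynomial R) ^ 2} with hIdef
  constructor
  · ext p
    simp only [Set.mem_range, Set.mem_setOf_eq]
    constructor
    · rintro ⟨q, rfl⟩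
      have key : ((Ideal.Quotient.mkₐ R I).comp
            ((AlgHom.fst R (Polynomial R) (Polynomial R)).comp (dubbyGluing R)))
          = ((Ideal.Quotient.mkₐ R I).comp
            ((AlgHom.snd R (Polynomial R) (Polynomial R)).comp (dubbyGluing R))) := by
        apply MvPolynomial.algHom_ext
        intro i
        simp only [AlgHom.comp_apply, Ideal.Quotient.mkₐ_eq_mk]
        fin_cases i
        · show Ideal.Quotient.mk I ((AlgHom.fst R (Polynomial R) (Polynomial R))
              (dubbyGluing R (MvPolynomial.X 0)))
            = Ideal.Quotient.mk I ((AlgHom.snd R (Polynomial R) (Polynomial R))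
              (dubbyGluing R (MvPolynomial.X 0)))
          rw [dubbyGluing_X0]
          rfl
        · show Ideal.Quotient.mk I ((AlgHom.fst R (Polynomial R) (Polynomial R))
              (dubbyGluing R (MvPolynomial.X 1)))
            = Ideal.Quotient.mk I ((AlgHom.snd R (Polynomial R) (Polynomial R))
              (dubbyGluing R (MvPolynomial.X 1)))
          rw [dubbyGluing_X1]
          show Ideal.Quotient.mk I (Polynomial.X ^ 2) = Ideal.Quotient.mk I 0
          rw [map_zero, Ideal.Quotient.eq_zero_iff_mem]
          exact Ideal.subset_span rfl
      have hq := AlgHom.congr_fun key q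
      simp only [AlgHom.comp_apply, Ideal.Quotient.mkₐ_eq_mk] at hq
      show Ideal.Quotient.mk I ((dubbyGluing R q).1 - (dubbyGluing R q).2) = 0
      rw [map_sub]
      exact sub_eq_zero_of_eq hq
    · intro hp
      have hm : p.1 - p.2 ∈ I := by
        rw [← Ideal.Quotient.eq_zero_iff_mem]
        exact hp
      rw [hIdef, Ideal.mem_span_singleton] at hm
      obtain ⟨h, hh⟩ := hm
      refine ⟨dubbyE R p.2 + MvPolynomial.X 1 * dubbyE R h, ?_⟩
      rw [map_add, map_mul, dubbyGluing_e, dubbyGluing_e, dubbyGluing_X1]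
      have hf : p.1 = p.2 + Polynomial.X ^ 2 * h := by linear_combination hh
      refine Prod.ext ?_ ?_
      · show p.2 + Polynomial.X ^ 2 * h = p.1
        rw [hf]
      · show p.2 + 0 * h = p.2
        ring
  · apply le_antisymm
    · intro p hp
      obtain ⟨a, b, hab⟩ := dubby_decomp R p
      have hd : dubbyGluing R (p - (dubbyE R a + MvPolynomial.X 1 * dubbyE R b)) = 0 :=
        dubbyRel_mem_ker R hab
      rw [map_sub, map_add, map_mul, dubbyGluing_e, dubbyGluing_e, dubbyGluing_X1] at hd
      have hp0 : dubbyGluing R p = 0 := hp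
      rw [hp0, zero_sub, neg_eq_zero] at hd
      have h2 : a = 0 := by
        have := congrArg Prod.snd hd
        simpa using this
      have h1 : b = 0 := by
        have := congrArg Prod.fst hd
        simp [h2] at this
        have hmon := (Polynomial.monic_X_pow (R := R) 2).mul_right_eq_zero_iff (q := b)
        rw [hmon] at this
        exact this
      rw [h2, h1] at hab
      simpa using hab
    · exact dubbyRel_mem_ker R
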